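/- (Example 1: characterization of SBC for the projection in the uniform–Bernoulli model.) In the uniform–Bernoulli model, let f₁(θ,y) := θ and let φ be a posterior family such that φ has no ties with respect to f₁ (the measures φ_0 and φ_1 on [0,1] are atomless), with quantile functions Φ⁻¹(x|y) := C⁻¹_{φ,f₁}(x|y). Then φ passes continuous SBC with respect to f₁ if and only if for every x ∈ [0,1]: Φ⁻¹(x|0) − (Φ⁻¹(x|0))²/2 + (Φ⁻¹(x|1))²/2 = x. -/

import Mathlib

open MeasureTheory Filter Topology

noncomputable section

namespace SBC

variable {Θ Y : Type*} [MeasurableSpace Θ] [MeasurableSpace Y]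

/-- Marginal density of the data: `π_marg(y) = ∫ obs(y|θ) prior(θ) dλΘ(θ)`. -/
def marg (lΘ : Measure Θ) (prior : Θ → ℝ) (obs : Y → Θ → ℝ) (y : Y) : ℝ :=
  ∫ θ, obs y θ * prior θ ∂lΘ

/-- Posterior density: `π_post(θ|y) = obs(y|θ) prior(θ) / π_marg(y)`. -/
def post (lΘ : Measure Θ) (prior : Θ → ℝ) (obs : Y → Θ → ℝ) (θ : Θ) (y : Y) : ℝ :=
  obs y θ * prior θ / marg lΘ prior obs y

/-- CDF of the test quantity `f` under the density `φ(·|y)`: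
`C_{φ,f}(s|y) = ∫ 1[f(θ,y) ≤ s] φ(θ|y) dλΘ(θ)`. -/
def Cdf (lΘ : Measure Θ) (φ f : Θ → Y → ℝ) (s : ℝ) (y : Y) : ℝ :=
  ∫ θ, (if f θ y ≤ s then φ θ y else 0) ∂lΘ

/-- Tie probability of the test quantity `f` under the density `φ(·|y)`:
`D_{φ,f}(s|y) = ∫ 1[f(θ,y) = s] φ(θ|y) dλΘ(θ)`. -/
def Dtie (lΘ : Measure Θ) (φ f : Θ → Y → ℝ) (s : ℝ) (y : Y) : ℝ :=
  ∫ θ, (if f θ y = s then φ θ y else 0) ∂lΘ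

/-- The family of densities `φ` has no ties w.r.t. `f`. -/
def NoTies (lΘ : Measure Θ) (φ f : Θ → Y → ℝ) : Prop :=
  ∀ (θt : Θ) (y : Y), Dtie lΘ φ f (f θt y) y = 0

/-- The continuous rank CDF `r_{φ,f}(x | θ̃, y)`. -/
def contRank (lΘ : Measure Θ) (φ f : Θ → Y → ℝ) (x : ℝ) (θt : Θ) (y : Y) : ℝ :=
  if Dtie lΘ φ f (f θt y) y = 0 then
    (if Cdf lΘ φ f (f θt y) y ≤ x then 1 else 0)
  else
    min 1 (max 0 ((x - Cdf lΘ φ f (f θt y) y + Dtie lΘ φ f (f θt y) y) /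
      Dtie lΘ φ f (f θt y) y))

/-- The continuous `q_{φ,f}(x|y)`: average of the continuous rank CDF over the true posterior. -/
def qfun (lΘ : Measure Θ) (prior : Θ → ℝ) (obs : Y → Θ → ℝ) (φ f : Θ → Y → ℝ)
    (x : ℝ) (y : Y) : ℝ :=
  ∫ θt, contRank lΘ φ f x θt y * post lΘ prior obs θt y ∂lΘ

/-- `φ` passes continuous SBC w.r.t. `f`. -/
def PassesContSBC (lΘ : Measure Θ) (lY : Measure Y) (prior : Θ → ℝ)
    (obs : Y → Θ → ℝ) (φ f : Θ → Y → ℝ) : Prop :=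
  ∀ x ∈ Set.Icc (0 : ℝ) 1,
    ∫ y, qfun lΘ prior obs φ f x y * marg lΘ prior obs y ∂lY = x

/-- Number of posterior draws whose test-quantity value is strictly below that of `θt`. -/
def Nless (f : Θ → Y → ℝ) {M : ℕ} (θs : Fin M → Θ) (θt : Θ) (y : Y) : ℕ :=
  (Finset.univ.filter fun m => f (θs m) y < f θt y).card

/-- Number of posterior draws whose test-quantity value ties with that of `θt`. -/
def Neq (f : Θ → Y → ℝ) {M : ℕ} (θs : Fin M → Θ) (θt : Θ) (y : Y) : ℕ :=
  (Finset.univ.filter fun m => f (θs m) y = f θt y).card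

/-- The measure on `Θ` with density `φ(·|y)` w.r.t. `lΘ`. -/
def postFamMeas (lΘ : Measure Θ) (φ : Θ → Y → ℝ) (y : Y) : Measure Θ :=
  lΘ.withDensity fun θ => ENNReal.ofReal (φ θ y)

/-- The `M`-sample rank CDF `R_{φ,f}(i | θ̃, y) = Pr(N_total ≤ i)` for i.i.d. draws from `φ_y`. -/
def sampleRank (lΘ : Measure Θ) (φ f : Θ → Y → ℝ) (M i : ℕ) (θt : Θ) (y : Y) : ℝ :=
  ∫ θs : Fin M → Θ,
    min 1 (max 0 (((i : ℝ) + 1 - (Nless f θs θt y : ℝ)) / ((Neq f θs θt y : ℝ) + 1)))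
    ∂(Measure.pi fun _ : Fin M => postFamMeas lΘ φ y)

/-- The `M`-sample `Q_{φ,f}(i|y)`: average of the sample rank CDF over the true posterior. -/
def Qfun (lΘ : Measure Θ) (prior : Θ → ℝ) (obs : Y → Θ → ℝ)
    (φ f : Θ → Y → ℝ) (M i : ℕ) (y : Y) : ℝ :=
  ∫ θt, sampleRank lΘ φ f M i θt y * post lΘ prior obs θt y ∂lΘ

/-- `φ` passes `M`-sample SBC w.r.t. `f`. -/
def PassesSampleSBC (lΘ : Measure Θ) (lY : Measure Y) (prior : Θ → ℝ)
    (obs : Y → Θ → ℝ) (φ f : Θ → Y → ℝ) (M : ℕ) : Prop :=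
  ∀ i < M, ∫ y, Qfun lΘ prior obs φ f M i y * marg lΘ prior obs y ∂lY
    = ((i : ℝ) + 1) / ((M : ℝ) + 1)

/-- Real-valued quantile function `C⁻¹_{φ,f}(x|y) = inf {s ∈ ℝ : x ≤ C_{φ,f}(s|y)}`. -/
def quantileR (lΘ : Measure Θ) (φ f : Θ → Y → ℝ) (x : ℝ) (y : Y) : ℝ :=
  sInf {s : ℝ | x ≤ Cdf lΘ φ f s y}

/-- Reference measure on the parameter space of the uniform–Bernoulli model:
Lebesgue measure restricted to `[0,1]`. -/
def ubMeas : Measure ℝ := MeasureTheory.volume.restrict (Set.Icc (0 : ℝ) 1)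

/-- Prior density of the uniform–Bernoulli model: uniform on `[0,1]`. -/
def ubPrior : ℝ → ℝ := fun _ => 1

/-- Observation density of the uniform–Bernoulli model:
`π_obs(y|θ) = θ^y (1-θ)^(1-y)` for `y ∈ {0,1}` (encoded as `Bool`). -/
def ubObs : Bool → ℝ → ℝ := fun y θ => if y then θ else 1 - θ

/-- The projection test quantity `f₁(θ, y) = θ`. -/
def f1 : ℝ → Bool → ℝ := fun θ _ => θ

section AuxOrder

lemma my_le_of_forall_pos_le_add {a b : ℝ} (h : ∀ ε : ℝ, 0 < ε → a ≤ b + ε) : a ≤ b := by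
  by_contra hc
  push_neg at hc
  have := h ((a - b)/2) (by linarith)
  linarith

lemma ubMeas_singleton (a : ℝ) : ubMeas {a} = 0 := by
  rw [ubMeas, Measure.restrict_apply (measurableSet_singleton a)]
  exact measure_mono_null Set.inter_subset_left Real.volume_singleton

variable {F : ℝ → ℝ}

/-- generalized right-inverse -/
def TT (F : ℝ → ℝ) (x : ℝ) : ℝ := sSup {s : ℝ | F s ≤ x}

/-- generalized left-inverse -/
def QQ (F : ℝ → ℝ) (x : ℝ) : ℝ := sInf {s : ℝ | x ≤ F s}

variable (hmono : Monotone F) (h0 : ∀ s, s ≤ 0 → F s = 0) (h1 : ∀ s, 1 ≤ s → F s = 1)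

include h1 in
lemma bddAbove_T {x : ℝ} (hx : x < 1) : BddAbove {s : ℝ | F s ≤ x} := by
  refine ⟨1, fun s hs => ?_⟩
  by_contra h
  push_neg at h
  have := h1 s h.le
  simp only [Set.mem_setOf_eq, this] at hs
  linarith

include h0 in
lemma nonempty_T {x : ℝ} (hx : 0 ≤ x) : Set.Nonempty {s : ℝ | F s ≤ x} :=
  ⟨0, by simp [h0 0 le_rfl, hx]⟩

include h0 in
lemma bddBelow_Q {x : ℝ} (hx : 0 < x) : BddBelow {s : ℝ | x ≤ F s} := by
  refine ⟨0, fun s hs => ?_⟩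
  by_contra h
  push_neg at h
  have := h0 s h.le
  simp only [Set.mem_setOf_eq, this] at hs
  linarith

include h1 in
lemma nonempty_Q {x : ℝ} (hx : x ≤ 1) : Set.Nonempty {s : ℝ | x ≤ F s} :=
  ⟨1, by simp [h1 1 le_rfl, hx]⟩

include h0 h1 in
lemma T_nonneg {x : ℝ} (hx : 0 ≤ x) (hx1 : x < 1) : 0 ≤ TT F x :=
  le_csSup (bddAbove_T h1 hx1) (by simp [h0 0 le_rfl, hx])

include h0 h1 in
lemma T_le_one {x : ℝ} (hx : 0 ≤ x) (hx1 : x < 1) : TT F x ≤ 1 := by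
  refine csSup_le (nonempty_T h0 hx) (fun s hs => ?_)
  by_contra h
  push_neg at h
  have := h1 s h.le
  simp only [Set.mem_setOf_eq, this] at hs
  linarith

include h0 h1 in
lemma Q_nonneg {x : ℝ} (hx : 0 < x) (hx1 : x ≤ 1) : 0 ≤ QQ F x :=
  le_csInf (nonempty_Q h1 hx1) (fun s hs => by
    by_contra h
    push_neg at h
    have := h0 s h.le
    simp only [Set.mem_setOf_eq, this] at hs
    linarith)

include h0 h1 in
lemma Q_le_one {x : ℝ} (hx : 0 < x) (hx1 : x ≤ 1) : QQ F x ≤ 1 :=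
  csInf_le (bddBelow_Q h0 hx) (by simp [h1 1 le_rfl, hx1])

include hmono h0 h1 in
lemma T_le_Q {x x' : ℝ} (hx : 0 ≤ x) (hxx' : x < x') (hx1 : x' ≤ 1) :
    TT F x ≤ QQ F x' := by
  refine le_csInf (nonempty_Q h1 hx1) (fun s' hs' => ?_)
  refine csSup_le (nonempty_T h0 hx) (fun s hs => ?_)
  simp only [Set.mem_setOf_eq] at hs hs'
  by_contra h
  push_neg at h
  have := hmono h.le
  linarith

include h0 in
lemma F_Q_sub_lt {x ε : ℝ} (hx : 0 < x) (hε : 0 < ε) : F (QQ F x - ε) < x := by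
  by_contra h
  push_neg at h
  have : QQ F x ≤ QQ F x - ε := csInf_le (bddBelow_Q h0 hx) h
  linarith

include h1 in
lemma F_T_add_gt {x ε : ℝ} (hx1 : x < 1) (hε : 0 < ε) : x < F (TT F x + ε) := by
  by_contra h
  push_neg at h
  have : TT F x + ε ≤ TT F x := le_csSup (bddAbove_T h1 hx1) h
  linarith

include h1 in
lemma le_T_of_F_le {x s : ℝ} (hx1 : x < 1) (hs : F s ≤ x) : s ≤ TT F x :=
  le_csSup (bddAbove_T h1 hx1) hs

include h0 in
lemma Q_le_of_le_F {x s : ℝ} (hx : 0 < x) (hs : x ≤ F s) : QQ F x ≤ s :=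
  csInf_le (bddBelow_Q h0 hx) hs

include hmono h0 in
lemma F_le_of_lt_T {x θ : ℝ} (hx : 0 ≤ x) (hθ : θ < TT F x) : F θ ≤ x := by
  by_contra h
  push_neg at h
  have : TT F x ≤ θ := csSup_le (nonempty_T h0 hx) (fun s hs => by
    simp only [Set.mem_setOf_eq] at hs
    by_contra hc
    push_neg at hc
    have := hmono hc.le
    linarith)
  linarith

include h0 in
lemma Q_zero_of_nonneg (hF : ∀ s, 0 ≤ F s) : QQ F 0 = 0 := by
  have hset : {s : ℝ | (0:ℝ) ≤ F s} = Set.univ := by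
    ext s; simp [hF s]
  rw [QQ, hset, csInf_of_not_bddBelow, Real.sInf_empty]
  exact not_bddBelow_univ

end AuxOrder

section AuxModel

lemma marg_ub (y : Bool) : marg ubMeas ubPrior ubObs y = 1/2 := by
  rw [marg]
  simp only [ubPrior, mul_one, ubMeas]
  rw [MeasureTheory.integral_Icc_eq_integral_Ioc,
    ← intervalIntegral.integral_of_le (zero_le_one)]
  cases y with
  | false =>
      rw [show ubObs false = fun θ : ℝ => 1 - θ from rfl]
      rw [intervalIntegral.integral_sub intervalIntegrable_const
        intervalIntegral.intervalIntegrable_id]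
      simp [integral_id]
      norm_num
  | true =>
      rw [show ubObs true = fun θ : ℝ => θ from rfl]
      rw [integral_id]
      norm_num

lemma post_ub (θ : ℝ) (y : Bool) :
    post ubMeas ubPrior ubObs θ y = 2 * ubObs y θ := by
  rw [post, marg_ub, ubPrior]
  ring

variable {φ : ℝ → Bool → ℝ}

lemma meas_phi (hφ_meas : Measurable (Function.uncurry φ)) (y : Bool) :
    Measurable (fun θ => φ θ y) :=
  hφ_meas.comp (measurable_id.prodMk measurable_const)

lemma integrable_phi (hφ_int : ∀ y, ∫ θ, φ θ y ∂ubMeas = 1) (y : Bool) :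
    Integrable (fun θ => φ θ y) ubMeas := by
  by_contra h
  have := MeasureTheory.integral_undef h
  rw [hφ_int y] at this
  exact one_ne_zero this

lemma cdf_eq (s : ℝ) (y : Bool) :
    Cdf ubMeas φ f1 s y = ∫ θ, (if θ ≤ s then φ θ y else 0) ∂ubMeas := rfl

lemma integrable_ind (hφ_meas : Measurable (Function.uncurry φ))
    (hφ_nonneg : ∀ (θ : ℝ) (y : Bool), 0 ≤ φ θ y)
    (hφ_int : ∀ y, ∫ θ, φ θ y ∂ubMeas = 1) (s : ℝ) (y : Bool) :
    Integrable (fun θ => if θ ≤ s then φ θ y else 0) ubMeas := by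
  refine (integrable_phi hφ_int y).mono ?_ ?_
  · exact ((meas_phi hφ_meas y).ite measurableSet_Iic measurable_const).aestronglyMeasurable
  · refine Filter.Eventually.of_forall (fun θ => ?_)
    simp only [Real.norm_eq_abs]
    split_ifs
    · exact le_rfl
    · simpa using abs_nonneg (φ θ y)

lemma cdf_mono (hφ_meas : Measurable (Function.uncurry φ))
    (hφ_nonneg : ∀ (θ : ℝ) (y : Bool), 0 ≤ φ θ y)
    (hφ_int : ∀ y, ∫ θ, φ θ y ∂ubMeas = 1) (y : Bool) :
    Monotone (fun s => Cdf ubMeas φ f1 s y) := by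
  intro s s' hss'
  simp only [cdf_eq]
  refine MeasureTheory.integral_mono (integrable_ind hφ_meas hφ_nonneg hφ_int s y)
    (integrable_ind hφ_meas hφ_nonneg hφ_int s' y) (fun θ => ?_)
  by_cases h1 : θ ≤ s
  · rw [if_pos h1, if_pos (h1.trans hss')]
  · rw [if_neg h1]
    split_ifs
    · exact hφ_nonneg θ y
    · exact le_rfl

end AuxModel

section AuxModel2

variable {φ : ℝ → Bool → ℝ}
variable (hφ_meas : Measurable (Function.uncurry φ))
variable (hφ_nonneg : ∀ (θ : ℝ) (y : Bool), 0 ≤ φ θ y)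
variable (hφ_int : ∀ y, ∫ θ, φ θ y ∂ubMeas = 1)

include hφ_nonneg in
lemma cdf_nonneg (s : ℝ) (y : Bool) : 0 ≤ Cdf ubMeas φ f1 s y := by
  rw [cdf_eq]
  refine MeasureTheory.integral_nonneg (fun θ => ?_)
  split_ifs
  · exact hφ_nonneg θ y
  · exact le_rfl

include hφ_meas hφ_nonneg hφ_int in
lemma cdf_le_one (s : ℝ) (y : Bool) : Cdf ubMeas φ f1 s y ≤ 1 := by
  rw [cdf_eq, ← hφ_int y]
  refine MeasureTheory.integral_mono (integrable_ind hφ_meas hφ_nonneg hφ_int s y)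
    (integrable_phi hφ_int y) (fun θ => ?_)
  split_ifs
  · exact le_rfl
  · exact hφ_nonneg θ y

lemma ae_mem_Icc : ∀ᵐ θ ∂ubMeas, θ ∈ Set.Icc (0:ℝ) 1 := by
  rw [ubMeas]
  exact MeasureTheory.ae_restrict_mem measurableSet_Icc

lemma ae_ne (a : ℝ) : ∀ᵐ θ ∂ubMeas, θ ≠ a := by
  rw [MeasureTheory.ae_iff]
  convert ubMeas_singleton a using 2
  ext θ
  simp

lemma cdf_zero {s : ℝ} (hs : s ≤ 0) (y : Bool) : Cdf ubMeas φ f1 s y = 0 := by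
  rw [cdf_eq]
  rw [MeasureTheory.integral_congr_ae (g := fun _ => (0:ℝ)) ?_, MeasureTheory.integral_zero]
  filter_upwards [ae_mem_Icc, ae_ne 0] with θ hθ hθ0
  rw [if_neg]
  intro hc
  exact hθ0 (le_antisymm (hc.trans hs) hθ.1)

include hφ_int in
lemma cdf_one {s : ℝ} (hs : 1 ≤ s) (y : Bool) : Cdf ubMeas φ f1 s y = 1 := by
  rw [cdf_eq]
  rw [MeasureTheory.integral_congr_ae (g := fun θ => φ θ y) ?_, hφ_int y]
  filter_upwards [ae_mem_Icc] with θ hθ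
  rw [if_pos (hθ.2.trans hs)]

lemma int_Icc_obs {T : ℝ} (hT : 0 ≤ T) (y : Bool) :
    ∫ θ in Set.Icc (0:ℝ) T, 2 * ubObs y θ =
      (if y then T^2 else 2*T - T^2) := by
  rw [MeasureTheory.integral_Icc_eq_integral_Ioc,
    ← intervalIntegral.integral_of_le hT]
  cases y with
  | false =>
      rw [show ubObs false = fun θ : ℝ => 1 - θ from rfl]
      simp only [if_false, Bool.false_eq_true]
      rw [show (fun θ : ℝ => 2 * (1 - θ)) = fun θ : ℝ => 2 - 2 * θ from by funext θ; ring]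
      rw [intervalIntegral.integral_sub intervalIntegrable_const
        (intervalIntegral.intervalIntegrable_id.const_mul 2),
        intervalIntegral.integral_const_mul, integral_id, intervalIntegral.integral_const]
      simp
      ring
  | true =>
      rw [show ubObs true = fun θ : ℝ => θ from rfl]
      rw [intervalIntegral.integral_const_mul, integral_id]
      simp only [if_true]
      ring

include hφ_meas hφ_nonneg hφ_int in
lemma qfun_repr (hnoties : NoTies ubMeas φ f1) {x : ℝ} (hx : 0 ≤ x) (hx1 : x < 1) (y : Bool) :
    qfun ubMeas ubPrior ubObs φ f1 x y =
      (if y then (TT (fun s => Cdf ubMeas φ f1 s y) x)^2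
       else 2 * TT (fun s => Cdf ubMeas φ f1 s y) x
         - (TT (fun s => Cdf ubMeas φ f1 s y) x)^2) := by
  have hm := cdf_mono hφ_meas hφ_nonneg hφ_int y
  have h0 : ∀ s, s ≤ 0 → Cdf ubMeas φ f1 s y = 0 := fun s hs => cdf_zero hs y
  have h1 : ∀ s, 1 ≤ s → Cdf ubMeas φ f1 s y = 1 := fun s hs => cdf_one hφ_int hs y
  set T := TT (fun s => Cdf ubMeas φ f1 s y) x with hTdef
  have hT0 : 0 ≤ T := T_nonneg h0 h1 hx hx1
  have hT1 : T ≤ 1 := T_le_one h0 h1 hx hx1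
  have hpt : ∀ θt : ℝ, contRank ubMeas φ f1 x θt y * post ubMeas ubPrior ubObs θt y =
      (if Cdf ubMeas φ f1 θt y ≤ x then 2 * ubObs y θt else 0) := by
    intro θt
    rw [contRank, if_pos (hnoties θt y), post_ub]
    show (if Cdf ubMeas φ f1 θt y ≤ x then (1:ℝ) else 0) * (2 * ubObs y θt) = _
    split_ifs
    · ring
    · ring
  rw [qfun]
  simp only [hpt]
  have hae : (fun θt : ℝ => if Cdf ubMeas φ f1 θt y ≤ x then 2 * ubObs y θt else 0)
      =ᵐ[ubMeas] fun θt => (Set.Iic T).indicator (fun θ => 2 * ubObs y θ) θt := by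
    filter_upwards [ae_ne T] with θ hθ
    rcases lt_or_gt_of_ne hθ with hlt | hgt
    · rw [if_pos (F_le_of_lt_T hm h0 hx hlt), Set.indicator_of_mem (Set.mem_Iic.2 hlt.le)]
    · rw [if_neg, Set.indicator_of_notMem (by simpa using hgt)]
      intro hc
      exact absurd (le_T_of_F_le h1 hx1 hc) (not_le.2 hgt)
  rw [MeasureTheory.integral_congr_ae hae,
    MeasureTheory.integral_indicator measurableSet_Iic]
  have : ubMeas.restrict (Set.Iic T) = MeasureTheory.volume.restrict (Set.Icc (0:ℝ) T) := by
    rw [ubMeas, Measure.restrict_restrict measurableSet_Iic]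
    congr 1
    ext θ
    simp only [Set.mem_inter_iff, Set.mem_Iic, Set.mem_Icc]
    constructor
    · rintro ⟨h1', h2', _⟩; exact ⟨h2', h1'⟩
    · rintro ⟨h1', h2'⟩; exact ⟨h2', h1', h2'.trans hT1⟩
  rw [this, int_Icc_obs hT0 y]

include hφ_meas hφ_nonneg hφ_int in
lemma qfun_one (hnoties : NoTies ubMeas φ f1) (y : Bool) :
    qfun ubMeas ubPrior ubObs φ f1 1 y = 1 := by
  have hpt : ∀ θt : ℝ, contRank ubMeas φ f1 1 θt y * post ubMeas ubPrior ubObs θt y =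
      2 * ubObs y θt := by
    intro θt
    rw [contRank, if_pos (hnoties θt y), post_ub]
    show (if Cdf ubMeas φ f1 θt y ≤ 1 then (1:ℝ) else 0) * (2 * ubObs y θt) = _
    rw [if_pos (cdf_le_one hφ_meas hφ_nonneg hφ_int _ y), one_mul]
  rw [qfun]
  simp only [hpt]
  have : ∫ θt : ℝ, 2 * ubObs y θt ∂ubMeas = ∫ θ in Set.Icc (0:ℝ) 1, 2 * ubObs y θ := by
    rw [ubMeas]
  rw [this, int_Icc_obs zero_le_one y]
  cases y <;> norm_num

lemma sbc_unfold (g : Bool → ℝ) :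
    ∫ y, g y * marg ubMeas ubPrior ubObs y ∂Measure.count
      = g false * (1/2) + g true * (1/2) := by
  rw [MeasureTheory.integral_fintype (Integrable.of_finite)]
  simp [marg_ub, Measure.count_singleton]
  ring

end AuxModel2

theorem projection_SBC_characterization_uniform_bernoulli
    (φ : ℝ → Bool → ℝ)
    (hφ_meas : Measurable (Function.uncurry φ))
    (hφ_nonneg : ∀ (θ : ℝ) (y : Bool), 0 ≤ φ θ y)
    (hφ_int : ∀ y, ∫ θ, φ θ y ∂ubMeas = 1)
    (hnoties : NoTies ubMeas φ f1) :
    PassesContSBC ubMeas Measure.count ubPrior ubObs φ f1 ↔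
      ∀ x ∈ Set.Icc (0 : ℝ) 1,
        quantileR ubMeas φ f1 x false
          - (quantileR ubMeas φ f1 x false) ^ 2 / 2
          + (quantileR ubMeas φ f1 x true) ^ 2 / 2 = x := by
  have hmnf : Monotone (fun s => Cdf ubMeas φ f1 s false) :=
    cdf_mono hφ_meas hφ_nonneg hφ_int false
  have hmnt : Monotone (fun s => Cdf ubMeas φ f1 s true) :=
    cdf_mono hφ_meas hφ_nonneg hφ_int true
  have h0f : ∀ s : ℝ, s ≤ 0 → (fun s => Cdf ubMeas φ f1 s false) s = 0 :=
    fun s hs => cdf_zero hs false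
  have h0t : ∀ s : ℝ, s ≤ 0 → (fun s => Cdf ubMeas φ f1 s true) s = 0 :=
    fun s hs => cdf_zero hs true
  have h1f : ∀ s : ℝ, 1 ≤ s → (fun s => Cdf ubMeas φ f1 s false) s = 1 :=
    fun s hs => cdf_one hφ_int hs false
  have h1t : ∀ s : ℝ, 1 ≤ s → (fun s => Cdf ubMeas φ f1 s true) s = 1 :=
    fun s hs => cdf_one hφ_int hs true
  have hquant : ∀ (x : ℝ) (y : Bool),
      quantileR ubMeas φ f1 x y = QQ (fun s => Cdf ubMeas φ f1 s y) x := fun _ _ => rfl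
  have hPG : PassesContSBC ubMeas Measure.count ubPrior ubObs φ f1 ↔
      (∀ x : ℝ, 0 ≤ x → x < 1 →
        TT (fun s => Cdf ubMeas φ f1 s false) x
          - (TT (fun s => Cdf ubMeas φ f1 s false) x)^2/2
          + (TT (fun s => Cdf ubMeas φ f1 s true) x)^2/2 = x) := by
    constructor
    · intro hp x hx0 hx1
      have h := hp x ⟨hx0, hx1.le⟩
      rw [sbc_unfold, qfun_repr hφ_meas hφ_nonneg hφ_int hnoties hx0 hx1 false,
        qfun_repr hφ_meas hφ_nonneg hφ_int hnoties hx0 hx1 true] at h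
      simp only [Bool.false_eq_true, if_false, if_true] at h
      linarith
    · intro hg x hx
      rw [sbc_unfold]
      rcases lt_or_eq_of_le hx.2 with hx1 | hx1
      · rw [qfun_repr hφ_meas hφ_nonneg hφ_int hnoties hx.1 hx1 false,
          qfun_repr hφ_meas hφ_nonneg hφ_int hnoties hx.1 hx1 true]
        have h := hg x hx.1 hx1
        simp only [Bool.false_eq_true, if_false, if_true]
        linarith
      · rw [hx1, qfun_one hφ_meas hφ_nonneg hφ_int hnoties false,
          qfun_one hφ_meas hφ_nonneg hφ_int hnoties true]
        norm_num
  rw [hPG]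
  constructor
  · -- G → H
    intro hg x hx
    rw [hquant, hquant]
    rcases eq_or_lt_of_le hx.1 with hx0 | hx0
    · rw [← hx0, Q_zero_of_nonneg h0f (fun s => cdf_nonneg hφ_nonneg s false),
        Q_zero_of_nonneg h0t (fun s => cdf_nonneg hφ_nonneg s true)]
      norm_num
    · have hQ0f : 0 ≤ QQ (fun s => Cdf ubMeas φ f1 s false) x := Q_nonneg h0f h1f hx0 hx.2
      have hQ0t : 0 ≤ QQ (fun s => Cdf ubMeas φ f1 s true) x := Q_nonneg h0t h1t hx0 hx.2
      have hQ1f : QQ (fun s => Cdf ubMeas φ f1 s false) x ≤ 1 := Q_le_one h0f h1f hx0 hx.2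
      have hQ1t : QQ (fun s => Cdf ubMeas φ f1 s true) x ≤ 1 := Q_le_one h0t h1t hx0 hx.2
      have key : ∀ ε : ℝ, 0 < ε →
          (QQ (fun s => Cdf ubMeas φ f1 s false) x
            - (QQ (fun s => Cdf ubMeas φ f1 s false) x)^2/2
            + (QQ (fun s => Cdf ubMeas φ f1 s true) x)^2/2 ≤ x + 3*ε)
          ∧ (x ≤ QQ (fun s => Cdf ubMeas φ f1 s false) x
            - (QQ (fun s => Cdf ubMeas φ f1 s false) x)^2/2
            + (QQ (fun s => Cdf ubMeas φ f1 s true) x)^2/2 + 3*ε) := by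
        intro ε hε
        set Qf := QQ (fun s => Cdf ubMeas φ f1 s false) x with hQfd
        set Qt := QQ (fun s => Cdf ubMeas φ f1 s true) x with hQtd
        set x' := max (max (Cdf ubMeas φ f1 (Qf - ε) false) (Cdf ubMeas φ f1 (Qt - ε) true))
          (max (x - ε) 0) with hx'd
        have hx'0 : 0 ≤ x' := le_max_of_le_right (le_max_right _ _)
        have hx'lt : x' < x := by
          apply max_lt (max_lt ?_ ?_) (max_lt (by linarith) hx0)
          · exact F_Q_sub_lt h0f hx0 hε
          · exact F_Q_sub_lt h0t hx0 hε
        have hx'ge : x - ε ≤ x' := le_max_of_le_right (le_max_left _ _)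
        have hx'1 : x' < 1 := lt_of_lt_of_le hx'lt hx.2
        have hgx := hg x' hx'0 hx'1
        set Tf := TT (fun s => Cdf ubMeas φ f1 s false) x' with hTfd
        set Tt := TT (fun s => Cdf ubMeas φ f1 s true) x' with hTtd
        have hTQf : Tf ≤ Qf := T_le_Q hmnf h0f h1f hx'0 hx'lt hx.2
        have hTQt : Tt ≤ Qt := T_le_Q hmnt h0t h1t hx'0 hx'lt hx.2
        have hQTf : Qf - ε ≤ Tf :=
          le_T_of_F_le h1f hx'1 (le_max_of_le_left (le_max_left _ _))
        have hQTt : Qt - ε ≤ Tt :=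
          le_T_of_F_le h1t hx'1 (le_max_of_le_left (le_max_right _ _))
        have hT0f : 0 ≤ Tf := T_nonneg h0f h1f hx'0 hx'1
        have hT0t : 0 ≤ Tt := T_nonneg h0t h1t hx'0 hx'1
        have hT1f : Tf ≤ 1 := T_le_one h0f h1f hx'0 hx'1
        have hT1t : Tt ≤ 1 := T_le_one h0t h1t hx'0 hx'1
        constructor
        · nlinarith [mul_nonneg (by linarith : (0:ℝ) ≤ Qf - Tf) (by linarith : (0:ℝ) ≤ Qf + Tf),
            mul_nonneg (by linarith : (0:ℝ) ≤ ε - (Qt - Tt)) (by linarith : (0:ℝ) ≤ Qt + Tt),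
            mul_nonneg hε.le (by linarith : (0:ℝ) ≤ 2 - Qt - Tt)]
        · nlinarith [mul_nonneg (by linarith : (0:ℝ) ≤ Qf - Tf) (by linarith : (0:ℝ) ≤ 2 - Qf - Tf),
            mul_nonneg (by linarith : (0:ℝ) ≤ Qt - Tt) (by linarith : (0:ℝ) ≤ Qt + Tt)]
      have hle : QQ (fun s => Cdf ubMeas φ f1 s false) x
          - (QQ (fun s => Cdf ubMeas φ f1 s false) x)^2/2
          + (QQ (fun s => Cdf ubMeas φ f1 s true) x)^2/2 ≤ x := by
        apply my_le_of_forall_pos_le_add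
        intro ε hε
        have := (key (ε/3) (by linarith)).1
        linarith
      have hge : x ≤ QQ (fun s => Cdf ubMeas φ f1 s false) x
          - (QQ (fun s => Cdf ubMeas φ f1 s false) x)^2/2
          + (QQ (fun s => Cdf ubMeas φ f1 s true) x)^2/2 := by
        apply my_le_of_forall_pos_le_add
        intro ε hε
        have := (key (ε/3) (by linarith)).2
        linarith
      linarith
  · -- H → G
    intro hh x hx0 hx1
    have hT0f : 0 ≤ TT (fun s => Cdf ubMeas φ f1 s false) x := T_nonneg h0f h1f hx0 hx1
    have hT0t : 0 ≤ TT (fun s => Cdf ubMeas φ f1 s true) x := T_nonneg h0t h1t hx0 hx1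
    have hT1f : TT (fun s => Cdf ubMeas φ f1 s false) x ≤ 1 := T_le_one h0f h1f hx0 hx1
    have hT1t : TT (fun s => Cdf ubMeas φ f1 s true) x ≤ 1 := T_le_one h0t h1t hx0 hx1
    have key : ∀ ε : ℝ, 0 < ε →
        (TT (fun s => Cdf ubMeas φ f1 s false) x
          - (TT (fun s => Cdf ubMeas φ f1 s false) x)^2/2
          + (TT (fun s => Cdf ubMeas φ f1 s true) x)^2/2 ≤ x + 3*ε)
        ∧ (x ≤ TT (fun s => Cdf ubMeas φ f1 s false) x
          - (TT (fun s => Cdf ubMeas φ f1 s false) x)^2/2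
          + (TT (fun s => Cdf ubMeas φ f1 s true) x)^2/2 + 3*ε) := by
      intro ε hε
      set Tf := TT (fun s => Cdf ubMeas φ f1 s false) x with hTfd
      set Tt := TT (fun s => Cdf ubMeas φ f1 s true) x with hTtd
      set x' := min (min (Cdf ubMeas φ f1 (Tf + ε) false) (Cdf ubMeas φ f1 (Tt + ε) true))
        (min (x + ε) 1) with hx'd
      have hx'gt : x < x' := by
        apply lt_min (lt_min ?_ ?_) (lt_min (by linarith) hx1)
        · exact F_T_add_gt h1f hx1 hε
        · exact F_T_add_gt h1t hx1 hε
      have hx'0 : 0 < x' := lt_of_le_of_lt hx0 hx'gt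
      have hx'1 : x' ≤ 1 := le_trans (min_le_right _ _) (min_le_right _ _)
      have hx'le : x' ≤ x + ε := le_trans (min_le_right _ _) (min_le_left _ _)
      have hhx := hh x' ⟨hx'0.le, hx'1⟩
      rw [hquant, hquant] at hhx
      set Qf := QQ (fun s => Cdf ubMeas φ f1 s false) x' with hQfd
      set Qt := QQ (fun s => Cdf ubMeas φ f1 s true) x' with hQtd
      have hTQf : Tf ≤ Qf := T_le_Q hmnf h0f h1f hx0 hx'gt hx'1
      have hTQt : Tt ≤ Qt := T_le_Q hmnt h0t h1t hx0 hx'gt hx'1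
      have hQTf : Qf ≤ Tf + ε :=
        Q_le_of_le_F h0f hx'0 (le_trans (min_le_left _ _) (min_le_left _ _))
      have hQTt : Qt ≤ Tt + ε :=
        Q_le_of_le_F h0t hx'0 (le_trans (min_le_left _ _) (min_le_right _ _))
      have hQ1f : Qf ≤ 1 := Q_le_one h0f h1f hx'0 hx'1
      have hQ1t : Qt ≤ 1 := Q_le_one h0t h1t hx'0 hx'1
      constructor
      · nlinarith [mul_nonneg (by linarith : (0:ℝ) ≤ Qf - Tf) (by linarith : (0:ℝ) ≤ 2 - Qf - Tf),
          mul_nonneg (by linarith : (0:ℝ) ≤ Qt - Tt) (by linarith : (0:ℝ) ≤ Qt + Tt)]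
      · nlinarith [mul_nonneg (by linarith : (0:ℝ) ≤ Qf - Tf) (by linarith : (0:ℝ) ≤ Qf + Tf),
          mul_nonneg (by linarith : (0:ℝ) ≤ ε - (Qt - Tt)) (by linarith : (0:ℝ) ≤ Qt + Tt),
          mul_nonneg hε.le (by linarith : (0:ℝ) ≤ 2 - Qt - Tt)]
    have hle : TT (fun s => Cdf ubMeas φ f1 s false) x
        - (TT (fun s => Cdf ubMeas φ f1 s false) x)^2/2
        + (TT (fun s => Cdf ubMeas φ f1 s true) x)^2/2 ≤ x := by
      apply my_le_of_forall_pos_le_add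
      intro ε hε
      have := (key (ε/3) (by linarith)).1
      linarith
    have hge : x ≤ TT (fun s => Cdf ubMeas φ f1 s false) x
        - (TT (fun s => Cdf ubMeas φ f1 s false) x)^2/2
        + (TT (fun s => Cdf ubMeas φ f1 s true) x)^2/2 := by
      apply my_le_of_forall_pos_le_add
      intro ε hε
      have := (key (ε/3) (by linarith)).2
      linarith
    linarith

end SBC
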